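/- Consider the true-positive-rate-disparity model: Y1 = (Y1s, Y1r) ∈ {0,1}² and Y0 ∈ {a_1, …, a_J} (J ≥ 2). Let X be a standard Borel space with probability measure μ_X, κ1 a kernel from X to probability measures on {0,1}², κ0 a kernel from X to probability measures on {a_1,…,a_J}, and μ1X, μ0X the induced joint laws. For a class a_ℓ set P11(x) := κ1(x)({(1,1)}), P01(x) := κ1(x)({(0,1)}), P_ℓ(x) := κ0(x)({a_ℓ}), and define the Fréchet bounds θ^U_{ℓ,1} := ∫ min{P11, P_ℓ} dμ_X, θ^L_{ℓ,1} := ∫ max{P11 + P_ℓ − 1, 0} dμ_X, θ^U_{ℓ,0} := ∫ min{P01, P_ℓ} dμ_X, θ^L_{ℓ,0} := ∫ max{P01 + P_ℓ − 1, 0} dμ_X. Fix distinct classes a_j ≠ a_{j†} and assume θ^L_{j,1} + θ^L_{j,0} > 0 and θ^L_{j†,1} + θ^L_{j†,0} > 0. Then the identified set of the true-positive-rate disparity, { μ({y1=(1,1), y0=a_j}) / μ({y1r=1, y0=a_j}) − μ({y1=(1,1), y0=a_{j†}}) / μ({y1r=1, y0=a_{j†}}) : μ ∈ M(μ1X, μ0X)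 }, equals the closed interval [δ^L, δ^U] with δ^U = θ^U_{j,1}/(θ^U_{j,1} + θ^L_{j,0}) − θ^L_{j†,1}/(θ^L_{j†,1} + θ^U_{j†,0}) and δ^L = θ^L_{j,1}/(θ^L_{j,1} + θ^U_{j,0}) − θ^U_{j†,1}/(θ^U_{j†,1} + θ^L_{j†,0}) (Corollary 2 for the TPRD measure, valid for any number J ≥ 2 of protected classes). -/

import Mathlib

open MeasureTheory ProbabilityTheory

/-- The set `M(μ1X, μ0X)` of probability measures on `Y1 × Y0 × X` whose projection on
`(Y1, X)` is `μ1X` and whose projection on `(Y0, X)` is `μ0X`. -/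
def MSet {Y1 Y0 X : Type*} [MeasurableSpace Y1] [MeasurableSpace Y0] [MeasurableSpace X]
    (μ1X : Measure (Y1 × X)) (μ0X : Measure (Y0 × X)) :
    Set (Measure (Y1 × Y0 × X)) :=
  {μ | IsProbabilityMeasure μ ∧
    μ.map (fun p => (p.1, p.2.2)) = μ1X ∧ μ.map (fun p => (p.2.1, p.2.2)) = μ0X}

/-
Every coupling `μ ∈ M(μ1X, μ0X)` has its cell masses between the Fréchet–Hoeffding bounds:
`μ(A × B × X) ≤ ∫ min (κ1 x A) (κ0 x B)` by splitting `X` according to which term of the minimum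
is attained, and the lower bound `∫ (κ1 x A + κ0 x B - 1)⁺` follows by subtracting the upper
bound for `A × Bᶜ` from the mass of `A`. As `a / (a + b)` increases in `a` and decreases in `b`,
the true positive rate of a class then lies between `θL1 / (θL1 + θU0)` and `θU1 / (θU1 + θL0)`.

Conversely both endpoints are attained. For fixed `x`, lay out the classes `(1,1)`, rest, `(0,1)`
of `Y1` and `j`, rest, `j†` of `Y0` as consecutive blocks of `[0, 1]` and couple them by the
lengths of the overlaps of the blocks: the cells `((1,1), j)` and `((0,1), j†)` get the `min`,
the two off-diagonal cells get `(· + · - 1)⁺`. Splitting each cell proportionally inside the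
classes and integrating in `x` gives a coupling realising `δ^U`; exchanging `j` and `j†` gives
one realising `δ^L`. Finally `M(μ1X, μ0X)` is convex and the disparity is continuous along the
segment joining these two couplings, so the intermediate value theorem fills in the interval.
-/
open Finset

noncomputable section

def overlap (I J : ℝ × ℝ) : ℝ := max (min I.2 J.2 - max I.1 J.1) 0

lemma overlap_nonneg (I J : ℝ × ℝ) : 0 ≤ overlap I J := le_max_right _ _

lemma overlap_comm (I J : ℝ × ℝ) : overlap I J = overlap J I := by
  simp only [overlap, min_comm, max_comm I.1]

lemma overlap_add_overlap (I : ℝ × ℝ) {a b c : ℝ} (hab : a ≤ b) (hbc : b ≤ c) :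
    overlap I (a, b) + overlap I (b, c) = overlap I (a, c) := by
  simp only [overlap, min_def, max_def]
  split_ifs <;> linarith

lemma overlap_eq_sub_of_le (I : ℝ × ℝ) {a c : ℝ} (ha : a ≤ I.1) (hI : I.1 ≤ I.2)
    (hc : I.2 ≤ c) : overlap I (a, c) = I.2 - I.1 := by
  simp only [overlap, min_eq_left hc, max_eq_left ha]
  exact max_eq_left (sub_nonneg.2 hI)

lemma continuous_overlap : Continuous fun z : (ℝ × ℝ) × (ℝ × ℝ) => overlap z.1 z.2 := by
  unfold overlap
  fun_prop

/-- Consecutive blocks of lengths `u`, `1 - u - v` and `v` tiling `[0, 1]`; the middle block is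
listed last, so that it matches `threeMasses u v`. -/
def threeBlocks (u v : ℝ) : Fin 3 → ℝ × ℝ := ![(0, u), (1 - v, 1), (u, 1 - v)]

def threeMasses (u v : ℝ) : Fin 3 → ℝ := ![u, v, 1 - u - v]

section threeBlocks

variable {u v : ℝ}

lemma sum_overlap_threeBlocks (hu : 0 ≤ u) (hv : 0 ≤ v) (huv : u + v ≤ 1) (I : ℝ × ℝ) :
    ∑ k, overlap I (threeBlocks u v k) = overlap I (0, 1) := by
  rw [Fin.sum_univ_three, add_right_comm]
  simp only [threeBlocks, Matrix.cons_val_zero, Matrix.cons_val_one, Matrix.cons_val_two,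
    Matrix.head_cons, Matrix.tail_cons]
  rw [overlap_add_overlap I hu (by linarith), overlap_add_overlap I (by linarith) (by linarith)]

lemma overlap_threeBlocks_zero_one (hu : 0 ≤ u) (hv : 0 ≤ v) (huv : u + v ≤ 1) (k : Fin 3) :
    overlap (threeBlocks u v k) (0, 1) = threeMasses u v k := by
  fin_cases k <;>
    simp only [threeBlocks, threeMasses, Fin.zero_eta, Fin.mk_one, Fin.reduceFinMk,
      Matrix.cons_val_zero, Matrix.cons_val_one, Matrix.cons_val_two, Matrix.head_cons,
      Matrix.tail_cons] <;>
    rw [overlap_eq_sub_of_le] <;> dsimp only <;> linarith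

lemma continuous_threeBlocks (k : Fin 3) :
    Continuous fun z : ℝ × ℝ => threeBlocks z.1 z.2 k := by
  fin_cases k <;>
    simp only [threeBlocks, Fin.zero_eta, Fin.mk_one, Fin.reduceFinMk, Matrix.cons_val_zero,
      Matrix.cons_val_one, Matrix.cons_val_two, Matrix.head_cons, Matrix.tail_cons] <;>
    fun_prop

end threeBlocks

/-- The quantile coupling of `threeMasses u v` and `threeMasses u' v'` for the order
`0 < 2 < 1`. -/
def blockCoupling (u v u' v' : ℝ) (k l : Fin 3) : ℝ :=
  overlap (threeBlocks u v k) (threeBlocks u' v' l)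

section blockCoupling

variable {u v u' v' : ℝ}

lemma sum_blockCoupling_right (hu : 0 ≤ u) (hv : 0 ≤ v) (huv : u + v ≤ 1)
    (hu' : 0 ≤ u') (hv' : 0 ≤ v') (huv' : u' + v' ≤ 1) (k : Fin 3) :
    ∑ l, blockCoupling u v u' v' k l = threeMasses u v k := by
  simp only [blockCoupling]
  rw [sum_overlap_threeBlocks hu' hv' huv', overlap_threeBlocks_zero_one hu hv huv]

lemma sum_blockCoupling_left (hu : 0 ≤ u) (hv : 0 ≤ v) (huv : u + v ≤ 1)
    (hu' : 0 ≤ u') (hv' : 0 ≤ v') (huv' : u' + v' ≤ 1) (l : Fin 3) :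
    ∑ k, blockCoupling u v u' v' k l = threeMasses u' v' l := by
  simp only [blockCoupling, overlap_comm _ (threeBlocks u' v' l)]
  exact sum_blockCoupling_right hu' hv' huv' hu hv huv l

lemma blockCoupling_zero_zero (hu : 0 ≤ u) (hu' : 0 ≤ u') :
    blockCoupling u v u' v' 0 0 = min u u' := by
  simp only [blockCoupling, threeBlocks, overlap, Matrix.cons_val_zero, min_def, max_def]
  split_ifs <;> linarith

lemma blockCoupling_zero_one (hu : u ≤ 1) (hv' : v' ≤ 1) :
    blockCoupling u v u' v' 0 1 = max (u + v' - 1) 0 := by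
  simp only [blockCoupling, threeBlocks, overlap, Matrix.cons_val_zero, Matrix.cons_val_one,
    min_def, max_def]
  split_ifs <;> linarith

lemma blockCoupling_one_zero (hv : v ≤ 1) (hu' : u' ≤ 1) :
    blockCoupling u v u' v' 1 0 = max (v + u' - 1) 0 := by
  rw [blockCoupling, overlap_comm, ← blockCoupling, blockCoupling_zero_one hu' hv, add_comm]

lemma blockCoupling_one_one (hv : 0 ≤ v) (hv' : 0 ≤ v') :
    blockCoupling u v u' v' 1 1 = min v v' := by
  simp only [blockCoupling, threeBlocks, overlap, Matrix.cons_val_one, Matrix.cons_val_zero,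
    min_def, max_def]
  split_ifs <;> linarith

lemma continuous_blockCoupling (k l : Fin 3) :
    Continuous fun z : (ℝ × ℝ) × (ℝ × ℝ) => blockCoupling z.1.1 z.1.2 z.2.1 z.2.2 k l :=
  continuous_overlap.comp (((continuous_threeBlocks k).comp continuous_fst).prodMk
    ((continuous_threeBlocks l).comp continuous_snd))

end blockCoupling

section lift

variable {α β α' β' : Type*} [Fintype α] [Fintype β] [DecidableEq α'] [DecidableEq β']

def fiberSum (f : α → α') (p : α → ℝ) (a' : α') : ℝ := ∑ x with f x = a', p x

def fiberShare (f : α → α') (p : α → ℝ) (a : α) : ℝ := p a / fiberSum f p (f a)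

lemma le_fiberSum {p : α → ℝ} (hp : 0 ≤ p) (f : α → α') (a : α) : p a ≤ fiberSum f p (f a) :=
  single_le_sum (fun x _ => hp x) (mem_filter.2 ⟨mem_univ a, rfl⟩)

lemma fiberSum_eq_of_fiber_singleton {f : α → α'} {a' : α'} {a : α}
    (h : ∀ x, f x = a' ↔ x = a) (p : α → ℝ) : fiberSum f p a' = p a :=
  sum_eq_single_of_mem a (mem_filter.2 ⟨mem_univ a, (h a).2 rfl⟩)
    fun x hx hxa => absurd ((h x).1 (mem_filter.1 hx).2) hxa

lemma sum_mul_fiberShare [Fintype α'] (f : α → α') (p : α → ℝ) {F : α' → ℝ}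
    (hF : ∀ a', fiberSum f p a' = 0 → F a' = 0) :
    ∑ a, F (f a) * fiberShare f p a = ∑ a', F a' := by
  rw [← sum_fiberwise univ f]
  refine sum_congr rfl fun a' _ => ?_
  calc ∑ a with f a = a', F (f a) * fiberShare f p a
      = ∑ a with f a = a', F a' / fiberSum f p a' * p a :=
        sum_congr rfl fun a ha => by
          rw [(mem_filter.1 ha).2, fiberShare, (mem_filter.1 ha).2]
          ring
    _ = F a' := by rw [← mul_sum, ← fiberSum, div_mul_cancel_of_imp (hF a')]

/-- Lifts a coupling `N` of the pushforwards of `p` and `q` along `f` and `g` to a coupling of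
`p` and `q`. -/
def liftCoupling (f : α → α') (g : β → β') (p : α → ℝ) (q : β → ℝ) (N : α' → β' → ℝ)
    (a : α) (b : β) : ℝ :=
  N (f a) (g b) * fiberShare f p a * fiberShare g q b

variable {f : α → α'} {g : β → β'} {p : α → ℝ} {q : β → ℝ} {N : α' → β' → ℝ}

lemma liftCoupling_nonneg (hN : ∀ a' b', 0 ≤ N a' b') (hp : 0 ≤ p) (hq : 0 ≤ q) (a : α)
    (b : β) : 0 ≤ liftCoupling f g p q N a b :=
  mul_nonneg (mul_nonneg (hN _ _) (div_nonneg (hp a) (sum_nonneg fun x _ => hp x)))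
    (div_nonneg (hq b) (sum_nonneg fun x _ => hq x))

variable [Fintype α'] [Fintype β']

lemma sum_liftCoupling_right (hN : ∀ a' b', 0 ≤ N a' b') (hp : 0 ≤ p)
    (hrow : ∀ a', ∑ b', N a' b' = fiberSum f p a')
    (hcol : ∀ b', ∑ a', N a' b' = fiberSum g q b') (a : α) :
    ∑ b, liftCoupling f g p q N a b = p a := by
  have hcol0 : ∀ b', fiberSum g q b' = 0 → N (f a) b' = 0 := fun b' h =>
    (sum_eq_zero_iff_of_nonneg fun a' _ => hN a' b').1 ((hcol b').trans h) _ (mem_univ _)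
  have hrow0 : fiberSum f p (f a) = 0 → p a = 0 := fun h =>
    le_antisymm (h ▸ le_fiberSum hp f a) (hp a)
  calc ∑ b, liftCoupling f g p q N a b
      = fiberShare f p a * ∑ b, N (f a) (g b) * fiberShare g q b := by
        rw [mul_sum]
        exact sum_congr rfl fun b _ => by rw [liftCoupling]; ring
    _ = p a := by
        rw [sum_mul_fiberShare g q hcol0, hrow, fiberShare, div_mul_cancel_of_imp hrow0]

lemma sum_liftCoupling_left (hN : ∀ a' b', 0 ≤ N a' b') (hq : 0 ≤ q)
    (hrow : ∀ a', ∑ b', N a' b' = fiberSum f p a')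
    (hcol : ∀ b', ∑ a', N a' b' = fiberSum g q b') (b : β) :
    ∑ a, liftCoupling f g p q N a b = q b := by
  simpa only [liftCoupling, mul_right_comm] using
    sum_liftCoupling_right (f := g) (g := f) (N := fun b' a' => N a' b') (fun b' a' => hN a' b')
      hq hcol hrow b

lemma liftCoupling_of_fibers_singleton (hN : ∀ a' b', 0 ≤ N a' b')
    (hrow : ∀ a', ∑ b', N a' b' = fiberSum f p a')
    (hcol : ∀ b', ∑ a', N a' b' = fiberSum g q b') {a : α} {b : β}
    (ha : ∀ x, f x = f a ↔ x = a) (hb : ∀ y, g y = g b ↔ y = b) :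
    liftCoupling f g p q N a b = N (f a) (g b) := by
  have hpa : p a = 0 → N (f a) (g b) = 0 := fun h => le_antisymm (calc
    N (f a) (g b) ≤ ∑ b', N (f a) b' := single_le_sum (fun b' _ => hN _ b') (mem_univ _)
    _ = 0 := by rw [hrow, fiberSum_eq_of_fiber_singleton ha, h]) (hN _ _)
  have hqb : q b = 0 → N (f a) (g b) = 0 := fun h => le_antisymm (calc
    N (f a) (g b) ≤ ∑ a', N a' (g b) := single_le_sum (fun a' _ => hN a' _) (mem_univ _)
    _ = 0 := by rw [hcol, fiberSum_eq_of_fiber_singleton hb, h]) (hN _ _)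
  rw [liftCoupling, fiberShare, fiberShare, fiberSum_eq_of_fiber_singleton ha,
    fiberSum_eq_of_fiber_singleton hb, mul_div_assoc' (N (f a) (g b)),
    mul_div_cancel_of_imp hpa, mul_div_assoc', mul_div_cancel_of_imp hqb]

end lift

section trichotomy

variable {α : Type*} [DecidableEq α] {a b : α}

def trichotomy (a b x : α) : Fin 3 := if x = a then 0 else if x = b then 1 else 2

lemma trichotomy_left (a b : α) : trichotomy a b a = 0 := if_pos rfl

lemma trichotomy_right (hab : a ≠ b) : trichotomy a b b = 1 := by
  simp [trichotomy, hab.symm]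

lemma trichotomy_eq_left_iff {x : α} : trichotomy a b x = trichotomy a b a ↔ x = a := by
  rw [trichotomy_left]
  unfold trichotomy
  split_ifs <;> simp_all

lemma trichotomy_eq_right_iff (hab : a ≠ b) {x : α} :
    trichotomy a b x = trichotomy a b b ↔ x = b := by
  rw [trichotomy_right hab]
  unfold trichotomy
  split_ifs <;> simp_all

lemma fiberSum_trichotomy [Fintype α] (hab : a ≠ b) {p : α → ℝ} (hp : ∑ x, p x = 1)
    (k : Fin 3) : fiberSum (trichotomy a b) p k = threeMasses (p a) (p b) k := by
  have h0 : fiberSum (trichotomy a b) p 0 = p a :=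
    trichotomy_left a b ▸ fiberSum_eq_of_fiber_singleton (fun _ => trichotomy_eq_left_iff) p
  have h1 : fiberSum (trichotomy a b) p 1 = p b :=
    trichotomy_right hab ▸ fiberSum_eq_of_fiber_singleton (fun _ => trichotomy_eq_right_iff hab) p
  have htot : ∑ k, fiberSum (trichotomy a b) p k = 1 := (sum_fiberwise _ _ p).trans hp
  rw [Fin.sum_univ_three, h0, h1] at htot
  fin_cases k
  · exact h0
  · exact h1
  · exact (by linarith : fiberSum (trichotomy a b) p 2 = 1 - p a - p b)

end trichotomy

section probabilityMeasure

variable {A : Type*} [Fintype A] [MeasurableSpace A] [MeasurableSingletonClass A]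

lemma sum_toReal_measure_singleton (ν : Measure A) [IsProbabilityMeasure ν] :
    ∑ a, (ν {a}).toReal = 1 := by
  simpa [measureReal_def] using sum_measureReal_singleton (μ := ν) univ

lemma toReal_measure_singleton_add_le_one [DecidableEq A] (ν : Measure A) [IsProbabilityMeasure ν]
    {a a' : A}
    (ha : a ≠ a') : (ν {a}).toReal + (ν {a'}).toReal ≤ 1 := by
  rw [← sum_pair (f := fun r => (ν {r}).toReal) ha, ← sum_toReal_measure_singleton ν]
  exact sum_le_sum_of_subset_of_nonneg (subset_univ _) fun _ _ _ => ENNReal.toReal_nonneg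

end probabilityMeasure

section extremeCoupling

variable {A B : Type*} [Fintype A] [Fintype B] [DecidableEq A] [DecidableEq B]
  [MeasurableSpace A] [MeasurableSpace B]

def extremeCoupling (ν : Measure A) (η : Measure B) (a a' : A) (b b' : B) : A → B → ℝ :=
  liftCoupling (trichotomy a a') (trichotomy b b') (fun r => (ν {r}).toReal)
    (fun c => (η {c}).toReal)
    (blockCoupling (ν {a}).toReal (ν {a'}).toReal (η {b}).toReal (η {b'}).toReal)

lemma extremeCoupling_nonneg (ν : Measure A) (η : Measure B) (a a' : A) (b b' : B) (r : A)
    (c : B) : 0 ≤ extremeCoupling ν η a a' b b' r c :=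
  liftCoupling_nonneg (fun _ _ => overlap_nonneg _ _) (fun _ => ENNReal.toReal_nonneg)
    (fun _ => ENNReal.toReal_nonneg) r c

variable [MeasurableSingletonClass A] [MeasurableSingletonClass B]

lemma measurable_extremeCoupling {X : Type*} [MeasurableSpace X] (κ1 : Kernel X A)
    (κ0 : Kernel X B) (a a' : A) (b b' : B) (r : A) (c : B) :
    Measurable fun x => extremeCoupling (κ1 x) (κ0 x) a a' b b' r c := by
  have hp : ∀ r, Measurable fun x => (κ1 x {r}).toReal := fun r =>
    (κ1.measurable_coe (measurableSet_singleton r)).ennreal_toReal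
  have hq : ∀ c, Measurable fun x => (κ0 x {c}).toReal := fun c =>
    (κ0.measurable_coe (measurableSet_singleton c)).ennreal_toReal
  have hN : ∀ k l, Measurable fun x => blockCoupling (κ1 x {a}).toReal (κ1 x {a'}).toReal
      (κ0 x {b}).toReal (κ0 x {b'}).toReal k l := fun k l =>
    (continuous_blockCoupling k l).measurable.comp
      (((hp a).prodMk (hp a')).prodMk ((hq b).prodMk (hq b')))
  simp only [extremeCoupling, liftCoupling, fiberShare, fiberSum]
  fun_prop

variable (ν : Measure A) (η : Measure B) [IsProbabilityMeasure ν] [IsProbabilityMeasure η]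
  {a a' : A} {b b' : B}

lemma sum_blockCoupling_eq_fiberSum (ha : a ≠ a') (hb : b ≠ b') :
    (∀ k, ∑ l, blockCoupling (ν {a}).toReal (ν {a'}).toReal (η {b}).toReal (η {b'}).toReal k l =
      fiberSum (trichotomy a a') (fun r => (ν {r}).toReal) k) ∧
    (∀ l, ∑ k, blockCoupling (ν {a}).toReal (ν {a'}).toReal (η {b}).toReal (η {b'}).toReal k l =
      fiberSum (trichotomy b b') (fun c => (η {c}).toReal) l) := by
  have hν := toReal_measure_singleton_add_le_one ν ha
  have hη := toReal_measure_singleton_add_le_one η hb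
  refine ⟨fun k => ?_, fun l => ?_⟩
  · rw [sum_blockCoupling_right ENNReal.toReal_nonneg ENNReal.toReal_nonneg hν
      ENNReal.toReal_nonneg ENNReal.toReal_nonneg hη,
      fiberSum_trichotomy ha (sum_toReal_measure_singleton ν)]
  · rw [sum_blockCoupling_left ENNReal.toReal_nonneg ENNReal.toReal_nonneg hν
      ENNReal.toReal_nonneg ENNReal.toReal_nonneg hη,
      fiberSum_trichotomy hb (sum_toReal_measure_singleton η)]

lemma sum_extremeCoupling_right (ha : a ≠ a') (hb : b ≠ b') (r : A) :
    ∑ c, extremeCoupling ν η a a' b b' r c = (ν {r}).toReal :=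
  sum_liftCoupling_right (fun _ _ => overlap_nonneg _ _) (fun _ => ENNReal.toReal_nonneg)
    (sum_blockCoupling_eq_fiberSum ν η ha hb).1 (sum_blockCoupling_eq_fiberSum ν η ha hb).2 r

lemma sum_extremeCoupling_left (ha : a ≠ a') (hb : b ≠ b') (c : B) :
    ∑ r, extremeCoupling ν η a a' b b' r c = (η {c}).toReal :=
  sum_liftCoupling_left (fun _ _ => overlap_nonneg _ _) (fun _ => ENNReal.toReal_nonneg)
    (sum_blockCoupling_eq_fiberSum ν η ha hb).1 (sum_blockCoupling_eq_fiberSum ν η ha hb).2 c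

lemma extremeCoupling_corners (ha : a ≠ a') (hb : b ≠ b') :
    extremeCoupling ν η a a' b b' a b = min (ν {a}).toReal (η {b}).toReal ∧
      extremeCoupling ν η a a' b b' a b' = max ((ν {a}).toReal + (η {b'}).toReal - 1) 0 ∧
      extremeCoupling ν η a a' b b' a' b = max ((ν {a'}).toReal + (η {b}).toReal - 1) 0 ∧
      extremeCoupling ν η a a' b b' a' b' = min (ν {a'}).toReal (η {b'}).toReal := by
  obtain ⟨hrow, hcol⟩ := sum_blockCoupling_eq_fiberSum ν η ha hb
  have hcorner := fun {r c} => liftCoupling_of_fibers_singleton (a := r) (b := c)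
    (N := blockCoupling (ν {a}).toReal (ν {a'}).toReal (η {b}).toReal (η {b'}).toReal)
    (fun _ _ => overlap_nonneg _ _) hrow hcol
  have hν := toReal_measure_singleton_add_le_one ν ha
  have hη := toReal_measure_singleton_add_le_one η hb
  have hν0 : 0 ≤ (ν {a}).toReal ∧ 0 ≤ (ν {a'}).toReal := ⟨ENNReal.toReal_nonneg,
    ENNReal.toReal_nonneg⟩
  have hη0 : 0 ≤ (η {b}).toReal ∧ 0 ≤ (η {b'}).toReal := ⟨ENNReal.toReal_nonneg,
    ENNReal.toReal_nonneg⟩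
  simp only [extremeCoupling]
  refine ⟨?_, ?_, ?_, ?_⟩
  · rw [hcorner (fun _ => trichotomy_eq_left_iff) (fun _ => trichotomy_eq_left_iff),
      trichotomy_left, trichotomy_left, blockCoupling_zero_zero hν0.1 hη0.1]
  · rw [hcorner (fun _ => trichotomy_eq_left_iff) (fun _ => trichotomy_eq_right_iff hb),
      trichotomy_left, trichotomy_right hb, blockCoupling_zero_one (by linarith) (by linarith)]
  · rw [hcorner (fun _ => trichotomy_eq_right_iff ha) (fun _ => trichotomy_eq_left_iff),
      trichotomy_right ha, trichotomy_left, blockCoupling_one_zero (by linarith) (by linarith)]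
  · rw [hcorner (fun _ => trichotomy_eq_right_iff ha) (fun _ => trichotomy_eq_right_iff hb),
      trichotomy_right ha, trichotomy_right hb, blockCoupling_one_one hν0.2 hη0.2]

end extremeCoupling

section frechetBounds

variable {X Y1 Y0 : Type*} [MeasurableSpace X] [MeasurableSpace Y1] [MeasurableSpace Y0]

def frechetLower (μX : Measure X) (κ1 : Kernel X Y1) (κ0 : Kernel X Y0) (A : Set Y1)
    (B : Set Y0) : ℝ :=
  ∫ x, max ((κ1 x A).toReal + (κ0 x B).toReal - 1) 0 ∂μX

def frechetUpper (μX : Measure X) (κ1 : Kernel X Y1) (κ0 : Kernel X Y0) (A : Set Y1)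
    (B : Set Y0) : ℝ :=
  ∫ x, min (κ1 x A).toReal (κ0 x B).toReal ∂μX

lemma frechetLower_nonneg (μX : Measure X) (κ1 : Kernel X Y1) (κ0 : Kernel X Y0) (A : Set Y1)
    (B : Set Y0) : 0 ≤ frechetLower μX κ1 κ0 A B :=
  integral_nonneg fun _ => le_max_right _ _

end frechetBounds

def cellMass {X A B : Type*} [MeasurableSpace X] [MeasurableSpace A] [MeasurableSpace B]
    (μ : Measure (A × B × X)) (a : A) (b : B) : ℝ :=
  (μ {p | p.1 = a ∧ p.2.1 = b}).toReal

section kernelCoupling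

variable {X Y1 Y0 : Type*} [MeasurableSpace X] [MeasurableSpace Y1] [MeasurableSpace Y0]

lemma map_compProd_mem_MSet (μX : Measure X) [IsProbabilityMeasure μX]
    (η : Kernel X (Y1 × Y0)) [IsMarkovKernel η] :
    (μX ⊗ₘ η).map (fun p => (p.2.1, p.2.2, p.1)) ∈
      MSet ((μX ⊗ₘ η.map Prod.fst).map Prod.swap) ((μX ⊗ₘ η.map Prod.snd).map Prod.swap) := by
  have he : Measurable fun p : X × Y1 × Y0 => (p.2.1, p.2.2, p.1) := by fun_prop
  refine ⟨Measure.isProbabilityMeasure_map he.aemeasurable, ?_, ?_⟩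
  · rw [Measure.compProd_map measurable_fst, Measure.map_map measurable_swap (by fun_prop),
      Measure.map_map (by fun_prop) he]
    rfl
  · rw [Measure.compProd_map measurable_snd, Measure.map_map measurable_swap (by fun_prop),
      Measure.map_map (by fun_prop) he]
    rfl

lemma map_compProd_apply_cell (μX : Measure X) [SFinite μX] (η : Kernel X (Y1 × Y0))
    [IsSFiniteKernel η] {A : Set Y1} {B : Set Y0} (hA : MeasurableSet A)
    (hB : MeasurableSet B) :
    (μX ⊗ₘ η).map (fun p => (p.2.1, p.2.2, p.1)) {p | p.1 ∈ A ∧ p.2.1 ∈ B} =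
      ∫⁻ x, η x (A ×ˢ B) ∂μX := by
  have he : Measurable fun p : X × Y1 × Y0 => (p.2.1, p.2.2, p.1) := by fun_prop
  have hcell : MeasurableSet {p : Y1 × Y0 × X | p.1 ∈ A ∧ p.2.1 ∈ B} :=
    (measurable_fst hA).inter (measurable_snd.fst hB)
  rw [Measure.map_apply he hcell, ← setLIntegral_univ,
    ← Measure.compProd_apply_prod MeasurableSet.univ (hA.prod hB)]
  congr 1
  ext p
  simp

end kernelCoupling

section cellKernel

variable {X A B : Type*} [MeasurableSpace X] [Fintype A] [Fintype B] [MeasurableSpace A]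
  [MeasurableSpace B] {w : X → A → B → ℝ} (hw : ∀ a b, Measurable fun x => w x a b)

def cellKernel : Kernel X (A × B) where
  toFun x := ∑ c : A × B, ENNReal.ofReal (w x c.1 c.2) • Measure.dirac c
  measurable' := Measure.measurable_of_measurable_coe _ fun s _ => by
    simp only [Measure.coe_finsetSum, Finset.sum_apply, Measure.smul_apply, smul_eq_mul]
    exact Finset.measurable_sum _ fun c _ => (hw c.1 c.2).ennreal_ofReal.mul_const _

lemma cellKernel_apply (x : X) {s : Set (A × B)} (hs : MeasurableSet s) :
    cellKernel hw x s = ∑ c : A × B, ENNReal.ofReal (w x c.1 c.2) * s.indicator 1 c := by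
  simp [cellKernel, Measure.dirac_apply' _ hs]

lemma cellKernel_apply_fst [MeasurableSingletonClass A] (x : X) (a : A) :
    cellKernel hw x (Prod.fst ⁻¹' {a}) = ∑ b, ENNReal.ofReal (w x a b) := by
  classical
  rw [cellKernel_apply _ _ (measurableSet_singleton a |>.preimage measurable_fst)]
  simp [Fintype.sum_prod_type, Set.indicator_apply]

lemma cellKernel_apply_snd [MeasurableSingletonClass B] (x : X) (b : B) :
    cellKernel hw x (Prod.snd ⁻¹' {b}) = ∑ a, ENNReal.ofReal (w x a b) := by
  classical
  rw [cellKernel_apply _ _ (measurableSet_singleton b |>.preimage measurable_snd)]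
  simp [Fintype.sum_prod_type, Set.indicator_apply]

lemma cellKernel_apply_singleton [MeasurableSingletonClass A] [MeasurableSingletonClass B]
    (x : X) (a : A) (b : B) : cellKernel hw x {(a, b)} = ENNReal.ofReal (w x a b) := by
  classical
  rw [cellKernel_apply _ _ (measurableSet_singleton _)]
  simp [Set.indicator_apply]

variable {hw}

lemma cellKernel_map_fst [MeasurableSingletonClass A] {κ1 : Kernel X A} [IsFiniteKernel κ1]
    (hw0 : ∀ x a b, 0 ≤ w x a b) (hrow : ∀ x a, ∑ b, w x a b = (κ1 x {a}).toReal) :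
    (cellKernel hw).map Prod.fst = κ1 := by
  ext x : 1
  refine Measure.ext_iff_singleton.2 fun a => ?_
  rw [Kernel.map_apply' _ measurable_fst _ (measurableSet_singleton a), cellKernel_apply_fst,
    ← ENNReal.ofReal_sum_of_nonneg fun b _ => hw0 x a b, hrow,
    ENNReal.ofReal_toReal (measure_ne_top _ _)]

lemma cellKernel_map_snd [MeasurableSingletonClass B] {κ0 : Kernel X B} [IsFiniteKernel κ0]
    (hw0 : ∀ x a b, 0 ≤ w x a b) (hcol : ∀ x b, ∑ a, w x a b = (κ0 x {b}).toReal) :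
    (cellKernel hw).map Prod.snd = κ0 := by
  ext x : 1
  refine Measure.ext_iff_singleton.2 fun b => ?_
  rw [Kernel.map_apply' _ measurable_snd _ (measurableSet_singleton b), cellKernel_apply_snd,
    ← ENNReal.ofReal_sum_of_nonneg fun a _ => hw0 x a b, hcol,
    ENNReal.ofReal_toReal (measure_ne_top _ _)]

end cellKernel

section weights

variable {X A B : Type*} [MeasurableSpace X] [Fintype A] [Fintype B] [MeasurableSpace A]
  [MeasurableSpace B] [MeasurableSingletonClass A] [MeasurableSingletonClass B]
  (μX : Measure X) [IsProbabilityMeasure μX] (κ1 : Kernel X A) [IsMarkovKernel κ1]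

lemma exists_mem_MSet_of_weights (κ0 : Kernel X B) [IsFiniteKernel κ0] {w : X → A → B → ℝ}
    (hw : ∀ a b, Measurable fun x => w x a b) (hw0 : ∀ x a b, 0 ≤ w x a b)
    (hrow : ∀ x a, ∑ b, w x a b = (κ1 x {a}).toReal)
    (hcol : ∀ x b, ∑ a, w x a b = (κ0 x {b}).toReal) :
    ∃ μ ∈ MSet ((μX ⊗ₘ κ1).map Prod.swap) ((μX ⊗ₘ κ0).map Prod.swap),
      ∀ a b, cellMass μ a b = ∫ x, w x a b ∂μX := by
  have h1 := cellKernel_map_fst (hw := hw) hw0 hrow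
  have h0 := cellKernel_map_snd (hw := hw) hw0 hcol
  have : IsMarkovKernel (cellKernel hw) := ⟨fun x => ⟨by
    rw [← Set.preimage_univ (f := Prod.fst), ← Kernel.map_apply' _ measurable_fst _
      MeasurableSet.univ, h1, measure_univ]⟩⟩
  refine ⟨_, h1 ▸ h0 ▸ map_compProd_mem_MSet μX (cellKernel hw), fun a b => ?_⟩
  have hcell := map_compProd_apply_cell μX (cellKernel hw) (measurableSet_singleton a)
    (measurableSet_singleton b)
  simp only [Set.mem_singleton_iff, Set.singleton_prod_singleton, cellKernel_apply_singleton]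
    at hcell
  rw [cellMass, hcell, integral_eq_lintegral_of_nonneg_ae (ae_of_all _ fun x => hw0 x a b)
    (hw a b).aestronglyMeasurable]

variable [DecidableEq A] [DecidableEq B] (κ0 : Kernel X B) [IsMarkovKernel κ0]

lemma exists_mem_MSet_extreme {a a' : A} (ha : a ≠ a') {b b' : B} (hb : b ≠ b') :
    ∃ μ ∈ MSet ((μX ⊗ₘ κ1).map Prod.swap) ((μX ⊗ₘ κ0).map Prod.swap),
      cellMass μ a b = frechetUpper μX κ1 κ0 {a} {b} ∧
      cellMass μ a b' = frechetLower μX κ1 κ0 {a} {b'} ∧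
      cellMass μ a' b = frechetLower μX κ1 κ0 {a'} {b} ∧
      cellMass μ a' b' = frechetUpper μX κ1 κ0 {a'} {b'} := by
  obtain ⟨μ, hμ, hcell⟩ := exists_mem_MSet_of_weights μX κ1 κ0
    (measurable_extremeCoupling κ1 κ0 a a' b b')
    (fun x => extremeCoupling_nonneg (κ1 x) (κ0 x) a a' b b')
    (fun x => sum_extremeCoupling_right (κ1 x) (κ0 x) ha hb)
    (fun x => sum_extremeCoupling_left (κ1 x) (κ0 x) ha hb)
  have hcorners := fun x => extremeCoupling_corners (κ1 x) (κ0 x) ha hb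
  exact ⟨μ, hμ, (hcell a b).trans (integral_congr_ae (ae_of_all _ fun x => (hcorners x).1)),
    (hcell a b').trans (integral_congr_ae (ae_of_all _ fun x => (hcorners x).2.1)),
    (hcell a' b).trans (integral_congr_ae (ae_of_all _ fun x => (hcorners x).2.2.1)),
    (hcell a' b').trans (integral_congr_ae (ae_of_all _ fun x => (hcorners x).2.2.2))⟩

end weights

lemma ENNReal.toReal_tsub_one_tsub {a b : ENNReal} (ha : a ≤ 1) (hb : b ≤ 1) :
    (a - (1 - b)).toReal = max (a.toReal + b.toReal - 1) 0 := by
  have ha' : a ≠ ⊤ := ne_top_of_le_ne_top ENNReal.one_ne_top ha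
  have h1b : (1 - b).toReal = 1 - b.toReal := by
    rw [ENNReal.toReal_sub_of_le hb ENNReal.one_ne_top, ENNReal.toReal_one]
  rcases le_total (1 - b) a with h | h
  · have := ENNReal.toReal_mono ha' h
    rw [ENNReal.toReal_sub_of_le h ha', h1b, max_eq_left (by linarith)]
    ring
  · have := ENNReal.toReal_mono (ne_top_of_le_ne_top ENNReal.one_ne_top tsub_le_self) h
    rw [tsub_eq_zero_of_le h, ENNReal.toReal_zero, max_eq_right (by linarith)]

section integralToReal

variable {X : Type*} [MeasurableSpace X] {μX : Measure X} {f : X → ENNReal}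

lemma integral_toReal_of_le_one (hf : Measurable f) (hf1 : ∀ x, f x ≤ 1) :
    ∫ x, (f x).toReal ∂μX = (∫⁻ x, f x ∂μX).toReal :=
  integral_toReal hf.aemeasurable (ae_of_all _ fun x => (hf1 x).trans_lt ENNReal.one_lt_top)

lemma lintegral_ne_top_of_le_one [IsFiniteMeasure μX] (hf1 : ∀ x, f x ≤ 1) : ∫⁻ x, f x ∂μX ≠ ⊤ :=
  ((lintegral_mono hf1).trans_lt (by simp [measure_lt_top])).ne

end integralToReal

section couplingBounds

variable {X Y1 Y0 : Type*} [MeasurableSpace X] [MeasurableSpace Y1] [MeasurableSpace Y0]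
  {μX : Measure X} [SFinite μX] {μ : Measure (Y1 × Y0 × X)}
  {κ1 : Kernel X Y1} {κ0 : Kernel X Y0} [IsSFiniteKernel κ1] [IsSFiniteKernel κ0]
  {A : Set Y1} {B : Set Y0}

lemma measure_preimage_prod_of_map_eq {Ω Y : Type*} [MeasurableSpace Ω] [MeasurableSpace Y]
    {ν : Measure Ω} {κ : Kernel X Y} [IsSFiniteKernel κ] {f : Ω → Y × X} (hf : Measurable f)
    (h : ν.map f = (μX ⊗ₘ κ).map Prod.swap) {C : Set Y} {S : Set X} (hC : MeasurableSet C)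
    (hS : MeasurableSet S) : ν (f ⁻¹' (C ×ˢ S)) = ∫⁻ x in S, κ x C ∂μX := by
  rw [← Measure.map_apply hf (hC.prod hS), h, Measure.map_apply measurable_swap (hC.prod hS),
    Set.preimage_swap_prod, Measure.compProd_apply_prod hS hC]

lemma measure_cell_le_lintegral_min
    (h1 : μ.map (fun p => (p.1, p.2.2)) = (μX ⊗ₘ κ1).map Prod.swap)
    (h0 : μ.map (fun p => (p.2.1, p.2.2)) = (μX ⊗ₘ κ0).map Prod.swap)
    (hA : MeasurableSet A) (hB : MeasurableSet B) :
    μ {p | p.1 ∈ A ∧ p.2.1 ∈ B} ≤ ∫⁻ x, min (κ1 x A) (κ0 x B) ∂μX := by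
  set S := {x | κ1 x A ≤ κ0 x B}
  have hS : MeasurableSet S := measurableSet_le (κ1.measurable_coe hA) (κ0.measurable_coe hB)
  have hT : MeasurableSet {p : Y1 × Y0 × X | p.2.2 ∈ S} := measurable_snd.snd hS
  calc μ {p | p.1 ∈ A ∧ p.2.1 ∈ B}
      = μ ({p | p.1 ∈ A ∧ p.2.1 ∈ B} ∩ {p | p.2.2 ∈ S})
        + μ ({p | p.1 ∈ A ∧ p.2.1 ∈ B} \ {p | p.2.2 ∈ S}) :=
      (measure_inter_add_sdiff _ hT).symm
    _ ≤ μ ((fun p => (p.1, p.2.2)) ⁻¹' (A ×ˢ S))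
        + μ ((fun p => (p.2.1, p.2.2)) ⁻¹' (B ×ˢ Sᶜ)) :=
      add_le_add (measure_mono fun p hp => ⟨hp.1.1, hp.2⟩)
        (measure_mono fun p hp => ⟨hp.1.2, hp.2⟩)
    _ = ∫⁻ x in S, κ1 x A ∂μX + ∫⁻ x in Sᶜ, κ0 x B ∂μX := by
      rw [measure_preimage_prod_of_map_eq (by fun_prop) h1 hA hS,
        measure_preimage_prod_of_map_eq (by fun_prop) h0 hB hS.compl]
    _ = ∫⁻ x in S, min (κ1 x A) (κ0 x B) ∂μX + ∫⁻ x in Sᶜ, min (κ1 x A) (κ0 x B) ∂μX := by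
      congr 1
      · exact setLIntegral_congr_fun hS fun x hx => (min_eq_left hx).symm
      · exact setLIntegral_congr_fun hS.compl fun x hx =>
          (min_eq_right (not_le.1 (show ¬κ1 x A ≤ κ0 x B from hx)).le).symm
    _ = ∫⁻ x, min (κ1 x A) (κ0 x B) ∂μX := lintegral_add_compl _ hS

lemma lintegral_tsub_le_measure_cell [IsFiniteMeasure μ]
    (h1 : μ.map (fun p => (p.1, p.2.2)) = (μX ⊗ₘ κ1).map Prod.swap)
    (h0 : μ.map (fun p => (p.2.1, p.2.2)) = (μX ⊗ₘ κ0).map Prod.swap)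
    (hA : MeasurableSet A) (hB : MeasurableSet B) :
    ∫⁻ x, (κ1 x A - κ0 x Bᶜ) ∂μX ≤ μ {p | p.1 ∈ A ∧ p.2.1 ∈ B} := by
  have hslab : ∫⁻ x, κ1 x A ∂μX = μ ((fun p => (p.1, p.2.2)) ⁻¹' (A ×ˢ Set.univ)) := by
    rw [measure_preimage_prod_of_map_eq (by fun_prop) h1 hA MeasurableSet.univ,
      setLIntegral_univ]
  have hsplit : μ ((fun p => (p.1, p.2.2)) ⁻¹' (A ×ˢ Set.univ)) =
      μ {p | p.1 ∈ A ∧ p.2.1 ∈ B} + μ {p | p.1 ∈ A ∧ p.2.1 ∈ Bᶜ} :=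
    (measure_inter_add_sdiff _ (measurable_snd.fst hB)).symm.trans
      (by congr 2 <;> ext p <;> simp)
  have hmin_ne_top : ∫⁻ x, min (κ1 x A) (κ0 x Bᶜ) ∂μX ≠ ⊤ :=
    ne_top_of_le_ne_top (hslab ▸ measure_ne_top μ _) (lintegral_mono fun x => min_le_left _ _)
  refine ENNReal.le_of_add_le_add_right hmin_ne_top ?_
  calc ∫⁻ x, (κ1 x A - κ0 x Bᶜ) ∂μX + ∫⁻ x, min (κ1 x A) (κ0 x Bᶜ) ∂μX
      = ∫⁻ x, κ1 x A ∂μX := by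
        rw [← lintegral_add_right _ ((κ1.measurable_coe hA).min (κ0.measurable_coe hB.compl))]
        simp only [tsub_add_min]
    _ = μ {p | p.1 ∈ A ∧ p.2.1 ∈ B} + μ {p | p.1 ∈ A ∧ p.2.1 ∈ Bᶜ} := hslab.trans hsplit
    _ ≤ μ {p | p.1 ∈ A ∧ p.2.1 ∈ B} + ∫⁻ x, min (κ1 x A) (κ0 x Bᶜ) ∂μX :=
      add_le_add_right (measure_cell_le_lintegral_min h1 h0 hA hB.compl) _

lemma toReal_measure_cell_mem_Icc [IsProbabilityMeasure μX] [IsMarkovKernel κ1]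
    [IsMarkovKernel κ0] (hμ : μ ∈ MSet ((μX ⊗ₘ κ1).map Prod.swap) ((μX ⊗ₘ κ0).map Prod.swap))
    (hA : MeasurableSet A) (hB : MeasurableSet B) :
    (μ {p | p.1 ∈ A ∧ p.2.1 ∈ B}).toReal ∈
      Set.Icc (frechetLower μX κ1 κ0 A B) (frechetUpper μX κ1 κ0 A B) := by
  obtain ⟨hprob, h1, h0⟩ := hμ
  have hκ1 := κ1.measurable_coe hA
  have hκ0 := κ0.measurable_coe hB
  constructor
  · have hpt : ∀ x, max ((κ1 x A).toReal + (κ0 x B).toReal - 1) 0 =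
        (κ1 x A - κ0 x Bᶜ).toReal := fun x => by
      rw [prob_compl_eq_one_sub hB, ENNReal.toReal_tsub_one_tsub prob_le_one prob_le_one]
    simp_rw [frechetLower, hpt]
    rw [integral_toReal_of_le_one (f := fun x => κ1 x A - κ0 x Bᶜ)
      (hκ1.sub (κ0.measurable_coe hB.compl)) fun x => tsub_le_self.trans prob_le_one]
    exact ENNReal.toReal_mono (measure_ne_top _ _) (lintegral_tsub_le_measure_cell h1 h0 hA hB)
  · have hpt : ∀ x, min (κ1 x A).toReal (κ0 x B).toReal = (min (κ1 x A) (κ0 x B)).toReal :=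
      fun x => (ENNReal.toReal_min (measure_ne_top _ _) (measure_ne_top _ _)).symm
    have hle : ∀ x, min (κ1 x A) (κ0 x B) ≤ 1 := fun x => (min_le_left _ _).trans prob_le_one
    simp_rw [frechetUpper, hpt]
    rw [integral_toReal_of_le_one (f := fun x => min (κ1 x A) (κ0 x B)) (hκ1.min hκ0) hle]
    exact ENNReal.toReal_mono (lintegral_ne_top_of_le_one hle)
      (measure_cell_le_lintegral_min h1 h0 hA hB)

end couplingBounds

lemma cellMass_mem_Icc {X A B : Type*} [MeasurableSpace X] [MeasurableSpace A]
    [MeasurableSpace B] [MeasurableSingletonClass A] [MeasurableSingletonClass B]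
    {μX : Measure X} [IsProbabilityMeasure μX] {κ1 : Kernel X A} {κ0 : Kernel X B}
    [IsMarkovKernel κ1] [IsMarkovKernel κ0] {μ : Measure (A × B × X)}
    (hμ : μ ∈ MSet ((μX ⊗ₘ κ1).map Prod.swap) ((μX ⊗ₘ κ0).map Prod.swap)) (a : A) (b : B) :
    cellMass μ a b ∈ Set.Icc (frechetLower μX κ1 κ0 {a} {b}) (frechetUpper μX κ1 κ0 {a} {b}) :=
  toReal_measure_cell_mem_Icc hμ (measurableSet_singleton a) (measurableSet_singleton b)

section mixture

variable {X Y1 Y0 : Type*} [MeasurableSpace X] [MeasurableSpace Y1] [MeasurableSpace Y0]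
  {μ1X : Measure (Y1 × X)} {μ0X : Measure (Y0 × X)} {μ ν : Measure (Y1 × Y0 × X)}

lemma smul_add_smul_mem_MSet (hμ : μ ∈ MSet μ1X μ0X) (hν : ν ∈ MSet μ1X μ0X) {s t : ENNReal}
    (hst : s + t = 1) : s • μ + t • ν ∈ MSet μ1X μ0X := by
  obtain ⟨hμP, hμ1, hμ0⟩ := hμ
  obtain ⟨hνP, hν1, hν0⟩ := hν
  refine ⟨⟨by simp [hst]⟩, ?_, ?_⟩
  · rw [Measure.map_add _ _ (by fun_prop), Measure.map_smul, Measure.map_smul, hμ1, hν1,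
      ← add_smul, hst, one_smul]
  · rw [Measure.map_add _ _ (by fun_prop), Measure.map_smul, Measure.map_smul, hμ0, hν0,
      ← add_smul, hst, one_smul]

lemma toReal_ofReal_smul_add_smul_apply [IsFiniteMeasure μ] [IsFiniteMeasure ν] {t : ℝ}
    (ht : t ∈ Set.Icc 0 1) (s : Set (Y1 × Y0 × X)) :
    ((ENNReal.ofReal t • μ + ENNReal.ofReal (1 - t) • ν) s).toReal =
      t * (μ s).toReal + (1 - t) * (ν s).toReal := by
  simp only [Measure.add_apply, Measure.smul_apply, smul_eq_mul]
  rw [ENNReal.toReal_add (by finiteness) (by finiteness), ENNReal.toReal_mul, ENNReal.toReal_mul,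
    ENNReal.toReal_ofReal ht.1, ENNReal.toReal_ofReal (sub_nonneg.2 ht.2)]

end mixture

lemma div_add_mem_Icc {a b L₁ U₁ L₀ U₀ : ℝ} (hL₁ : 0 ≤ L₁) (hL₀ : 0 ≤ L₀) (hL : 0 < L₁ + L₀)
    (ha : a ∈ Set.Icc L₁ U₁) (hb : b ∈ Set.Icc L₀ U₀) :
    a / (a + b) ∈ Set.Icc (L₁ / (L₁ + U₀)) (U₁ / (U₁ + L₀)) := by
  obtain ⟨haL, haU⟩ := ha
  obtain ⟨hbL, hbU⟩ := hb
  constructor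
  · rw [div_le_div_iff₀ (by linarith) (by linarith)]
    nlinarith
  · rw [div_le_div_iff₀ (by linarith) (by linarith)]
    nlinarith

lemma continuousOn_affine_div_affine {a a' c c' : ℝ} (hc : 0 < c) (hc' : 0 < c') :
    ContinuousOn (fun t => (t * a + (1 - t) * a') / (t * c + (1 - t) * c')) (Set.Icc 0 1) :=
  ContinuousOn.div (by fun_prop) (by fun_prop) fun t ht => by
    have := lt_min hc hc'
    nlinarith [mul_nonneg ht.1 (sub_nonneg.2 (min_le_left c c')),
      mul_nonneg (sub_nonneg.2 ht.2) (sub_nonneg.2 (min_le_right c c'))]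

section tpr

variable {X B : Type*} [MeasurableSpace X] [MeasurableSpace B]

/-- The mass of `{Y1r = 1, Y0 = ℓ}`, where `Y1 = (Y1s, Y1r)`. -/
def positiveMass (μ : Measure ((Fin 2 × Fin 2) × B × X)) (ℓ : B) : ℝ :=
  (μ {p | p.1.2 = 1 ∧ p.2.1 = ℓ}).toReal

def tpr (μ : Measure ((Fin 2 × Fin 2) × B × X)) (ℓ : B) : ℝ :=
  cellMass μ (1, 1) ℓ / positiveMass μ ℓ

lemma positiveMass_eq [MeasurableSingletonClass B] (μ : Measure ((Fin 2 × Fin 2) × B × X))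
    [IsFiniteMeasure μ] (ℓ : B) :
    positiveMass μ ℓ = cellMass μ (1, 1) ℓ + cellMass μ (0, 1) ℓ := by
  have hsplit : {p : (Fin 2 × Fin 2) × B × X | p.1.2 = 1 ∧ p.2.1 = ℓ} =
      {p | p.1 = (1, 1) ∧ p.2.1 = ℓ} ∪ {p | p.1 = (0, 1) ∧ p.2.1 = ℓ} := by
    ext ⟨⟨s, r⟩, c, x⟩
    fin_cases s <;> simp
  have hdisj : Disjoint {p : (Fin 2 × Fin 2) × B × X | p.1 = (1, 1) ∧ p.2.1 = ℓ}
      {p | p.1 = (0, 1) ∧ p.2.1 = ℓ} :=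
    Set.disjoint_left.2 fun p h1 h0 => by simp_all
  have hmeas : MeasurableSet {p : (Fin 2 × Fin 2) × B × X | p.1 = (0, 1) ∧ p.2.1 = ℓ} :=
    (measurable_fst (measurableSet_singleton _)).inter
      (measurable_snd.fst (measurableSet_singleton _))
  rw [positiveMass, hsplit, measure_union hdisj hmeas,
    ENNReal.toReal_add (by finiteness) (by finiteness)]
  rfl

lemma tpr_eq [MeasurableSingletonClass B] (μ : Measure ((Fin 2 × Fin 2) × B × X))
    [IsFiniteMeasure μ] (ℓ : B) :
    tpr μ ℓ = cellMass μ (1, 1) ℓ / (cellMass μ (1, 1) ℓ + cellMass μ (0, 1) ℓ) := by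
  rw [tpr, positiveMass_eq]

lemma tpr_mem_Icc [MeasurableSingletonClass B] {μX : Measure X} [IsProbabilityMeasure μX]
    {κ1 : Kernel X (Fin 2 × Fin 2)} [IsMarkovKernel κ1] {κ0 : Kernel X B} [IsMarkovKernel κ0]
    {μ : Measure ((Fin 2 × Fin 2) × B × X)}
    (hμ : μ ∈ MSet ((μX ⊗ₘ κ1).map Prod.swap) ((μX ⊗ₘ κ0).map Prod.swap)) {ℓ : B}
    (hpos : 0 < frechetLower μX κ1 κ0 {(1, 1)} {ℓ} + frechetLower μX κ1 κ0 {(0, 1)} {ℓ}) :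
    tpr μ ℓ ∈ Set.Icc
      (frechetLower μX κ1 κ0 {(1, 1)} {ℓ} /
        (frechetLower μX κ1 κ0 {(1, 1)} {ℓ} + frechetUpper μX κ1 κ0 {(0, 1)} {ℓ}))
      (frechetUpper μX κ1 κ0 {(1, 1)} {ℓ} /
        (frechetUpper μX κ1 κ0 {(1, 1)} {ℓ} + frechetLower μX κ1 κ0 {(0, 1)} {ℓ})) := by
  have := hμ.1
  rw [tpr_eq]
  exact div_add_mem_Icc (frechetLower_nonneg ..) (frechetLower_nonneg ..) hpos
    (cellMass_mem_Icc hμ _ _) (cellMass_mem_Icc hμ _ _)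

lemma tpr_ofReal_smul_add_smul {μ ν : Measure ((Fin 2 × Fin 2) × B × X)} [IsFiniteMeasure μ]
    [IsFiniteMeasure ν] {t : ℝ} (ht : t ∈ Set.Icc 0 1) (ℓ : B) :
    tpr (ENNReal.ofReal t • μ + ENNReal.ofReal (1 - t) • ν) ℓ =
      (t * cellMass μ (1, 1) ℓ + (1 - t) * cellMass ν (1, 1) ℓ) /
        (t * positiveMass μ ℓ + (1 - t) * positiveMass ν ℓ) := by
  simp only [tpr, cellMass, positiveMass, toReal_ofReal_smul_add_smul_apply ht]

lemma Icc_subset_tpr_sub {μ1X : Measure ((Fin 2 × Fin 2) × X)} {μ0X : Measure (B × X)}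
    {μ ν : Measure ((Fin 2 × Fin 2) × B × X)} (hμ : μ ∈ MSet μ1X μ0X) (hν : ν ∈ MSet μ1X μ0X)
    {j j' : B} (hμj : 0 < positiveMass μ j) (hμj' : 0 < positiveMass μ j')
    (hνj : 0 < positiveMass ν j) (hνj' : 0 < positiveMass ν j') :
    Set.Icc (tpr ν j - tpr ν j') (tpr μ j - tpr μ j') ⊆
      {d | ∃ ρ ∈ MSet μ1X μ0X, d = tpr ρ j - tpr ρ j'} := by
  have := hμ.1
  have := hν.1
  set path : ℝ → Measure ((Fin 2 × Fin 2) × B × X) :=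
    fun t => ENNReal.ofReal t • μ + ENNReal.ofReal (1 - t) • ν
  have hcont : ContinuousOn (fun t => tpr (path t) j - tpr (path t) j') (Set.Icc 0 1) :=
    ((continuousOn_affine_div_affine (a := cellMass μ (1, 1) j) (a' := cellMass ν (1, 1) j)
      hμj hνj).sub (continuousOn_affine_div_affine (a := cellMass μ (1, 1) j')
        (a' := cellMass ν (1, 1) j') hμj' hνj')).congr
      fun t ht => by simp only [path, tpr_ofReal_smul_add_smul ht, Pi.sub_apply]
  have h0 : path 0 = ν := by simp [path]
  have h1 : path 1 = μ := by simp [path]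
  intro d hd
  obtain ⟨t, ht, rfl⟩ :=
    intermediate_value_Icc zero_le_one hcont (by simpa only [h0, h1] using hd)
  refine ⟨path t, smul_add_smul_mem_MSet hμ hν ?_, rfl⟩
  rw [← ENNReal.ofReal_add ht.1 (sub_nonneg.2 ht.2), add_sub_cancel, ENNReal.ofReal_one]

lemma exists_mem_MSet_tpr_sub_eq [Fintype B] [DecidableEq B] [MeasurableSingletonClass B]
    (μX : Measure X) [IsProbabilityMeasure μX] (κ1 : Kernel X (Fin 2 × Fin 2))
    [IsMarkovKernel κ1] (κ0 : Kernel X B) [IsMarkovKernel κ0] {j j' : B} (hjj' : j ≠ j')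
    (hj : 0 < frechetLower μX κ1 κ0 {(1, 1)} {j} + frechetLower μX κ1 κ0 {(0, 1)} {j})
    (hj' : 0 < frechetLower μX κ1 κ0 {(1, 1)} {j'} + frechetLower μX κ1 κ0 {(0, 1)} {j'})
    {d : ℝ} (hd : d ∈ Set.Icc
      (frechetLower μX κ1 κ0 {(1, 1)} {j} /
          (frechetLower μX κ1 κ0 {(1, 1)} {j} + frechetUpper μX κ1 κ0 {(0, 1)} {j}) -
        frechetUpper μX κ1 κ0 {(1, 1)} {j'} /
          (frechetUpper μX κ1 κ0 {(1, 1)} {j'} + frechetLower μX κ1 κ0 {(0, 1)} {j'}))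
      (frechetUpper μX κ1 κ0 {(1, 1)} {j} /
          (frechetUpper μX κ1 κ0 {(1, 1)} {j} + frechetLower μX κ1 κ0 {(0, 1)} {j}) -
        frechetLower μX κ1 κ0 {(1, 1)} {j'} /
          (frechetLower μX κ1 κ0 {(1, 1)} {j'} + frechetUpper μX κ1 κ0 {(0, 1)} {j'}))) :
    ∃ μ ∈ MSet ((μX ⊗ₘ κ1).map Prod.swap) ((μX ⊗ₘ κ0).map Prod.swap),
      d = tpr μ j - tpr μ j' := by
  have h10 : ((1, 1) : Fin 2 × Fin 2) ≠ (0, 1) := by decide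
  obtain ⟨μU, hU, hU1, hU2, hU3, hU4⟩ := exists_mem_MSet_extreme μX κ1 κ0 h10 hjj'
  obtain ⟨μL, hL, hL1, hL2, hL3, hL4⟩ := exists_mem_MSet_extreme μX κ1 κ0 h10 hjj'.symm
  have := hU.1
  have := hL.1
  have hLU : ∀ r ℓ, frechetLower μX κ1 κ0 {r} {ℓ} ≤ frechetUpper μX κ1 κ0 {r} {ℓ} :=
    fun r ℓ => (cellMass_mem_Icc hU r ℓ).1.trans (cellMass_mem_Icc hU r ℓ).2
  have hUj : 0 < positiveMass μU j := by
    rw [positiveMass_eq, hU1, hU3]; linarith [hLU (1, 1) j]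
  have hUj' : 0 < positiveMass μU j' := by
    rw [positiveMass_eq, hU2, hU4]; linarith [hLU (0, 1) j']
  have hLj : 0 < positiveMass μL j := by
    rw [positiveMass_eq, hL2, hL4]; linarith [hLU (0, 1) j]
  have hLj' : 0 < positiveMass μL j' := by
    rw [positiveMass_eq, hL1, hL3]; linarith [hLU (1, 1) j']
  refine Icc_subset_tpr_sub hU hL hUj hUj' hLj hLj' ?_
  rwa [tpr_eq, tpr_eq, tpr_eq, tpr_eq, hU1, hU2, hU3, hU4, hL1, hL2, hL3, hL4]

end tpr

end

lemma sub_mem_Icc_sub {x y a b c d : ℝ} (hx : x ∈ Set.Icc a b) (hy : y ∈ Set.Icc c d) :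
    x - y ∈ Set.Icc (a - d) (b - c) :=
  ⟨by linarith [hx.1, hy.2], by linarith [hx.2, hy.1]⟩

theorem tprd_interval_general
    {J : ℕ} {X : Type*} [MeasurableSpace X]
    (μX : Measure X) [IsProbabilityMeasure μX]
    (κ1 : Kernel X (Fin 2 × Fin 2)) [IsMarkovKernel κ1]
    (κ0 : Kernel X (Fin J)) [IsMarkovKernel κ0]
    (μ1X : Measure ((Fin 2 × Fin 2) × X)) (μ0X : Measure (Fin J × X))
    (hκ1 : (μX.compProd κ1).map Prod.swap = μ1X)
    (hκ0 : (μX.compProd κ0).map Prod.swap = μ0X)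
    (j j' : Fin J) (hjj' : j ≠ j')
    (P11 P01 : X → ℝ) (Pc : Fin J → X → ℝ)
    (hP11 : P11 = fun x => (κ1 x {((1:Fin 2), (1:Fin 2))}).toReal)
    (hP01 : P01 = fun x => (κ1 x {((0:Fin 2), (1:Fin 2))}).toReal)
    (hPc : Pc = fun ℓ x => (κ0 x {ℓ}).toReal)
    (θU1 θL1 θU0 θL0 : Fin J → ℝ)
    (hθU1 : θU1 = fun ℓ => ∫ x, min (P11 x) (Pc ℓ x) ∂μX)
    (hθL1 : θL1 = fun ℓ => ∫ x, max (P11 x + Pc ℓ x - 1) 0 ∂μX)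
    (hθU0 : θU0 = fun ℓ => ∫ x, min (P01 x) (Pc ℓ x) ∂μX)
    (hθL0 : θL0 = fun ℓ => ∫ x, max (P01 x + Pc ℓ x - 1) 0 ∂μX)
    (hpos_j : 0 < θL1 j + θL0 j) (hpos_j' : 0 < θL1 j' + θL0 j') :
    {d : ℝ | ∃ μ ∈ MSet μ1X μ0X,
        d = (μ {p : (Fin 2 × Fin 2) × Fin J × X | p.1 = (1, 1) ∧ p.2.1 = j}).toReal /
              (μ {p : (Fin 2 × Fin 2) × Fin J × X | p.1.2 = 1 ∧ p.2.1 = j}).toReal -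
            (μ {p : (Fin 2 × Fin 2) × Fin J × X | p.1 = (1, 1) ∧ p.2.1 = j'}).toReal /
              (μ {p : (Fin 2 × Fin 2) × Fin J × X | p.1.2 = 1 ∧ p.2.1 = j'}).toReal} =
      Set.Icc
        (θL1 j / (θL1 j + θU0 j) - θU1 j' / (θU1 j' + θL0 j'))
        (θU1 j / (θU1 j + θL0 j) - θL1 j' / (θL1 j' + θU0 j')) := by
  subst hP11 hP01 hPc hθU1 hθL1 hθU0 hθL0 hκ1 hκ0
  ext d
  constructor
  · rintro ⟨μ, hμ, rfl⟩
    exact sub_mem_Icc_sub (tpr_mem_Icc hμ hpos_j) (tpr_mem_Icc hμ hpos_j')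
  · exact exists_mem_MSet_tpr_sub_eq μX κ1 κ0 hjj' hpos_j hpos_j'

/-- Corollary 2: for any number `J ≥ 2` of protected classes, the identified set of the
true-positive-rate disparity `δ_TPRD(j, j†)` between two distinct classes equals the closed
interval `[δ^L, δ^U]` formed from the Fréchet–Hoeffding bounds. -/
theorem tprd_interval
    {J : ℕ} (hJ : 2 ≤ J) {X : Type*} [MeasurableSpace X] [StandardBorelSpace X]
    (μX : Measure X) [IsProbabilityMeasure μX]
    (κ1 : Kernel X (Fin 2 × Fin 2)) [IsMarkovKernel κ1]
    (κ0 : Kernel X (Fin J)) [IsMarkovKernel κ0]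
    (μ1X : Measure ((Fin 2 × Fin 2) × X)) (μ0X : Measure (Fin J × X))
    (hκ1 : (μX.compProd κ1).map Prod.swap = μ1X)
    (hκ0 : (μX.compProd κ0).map Prod.swap = μ0X)
    (j j' : Fin J) (hjj' : j ≠ j')
    (P11 P01 : X → ℝ) (Pc : Fin J → X → ℝ)
    (hP11 : P11 = fun x => (κ1 x {((1:Fin 2), (1:Fin 2))}).toReal)
    (hP01 : P01 = fun x => (κ1 x {((0:Fin 2), (1:Fin 2))}).toReal)
    (hPc : Pc = fun ℓ x => (κ0 x {ℓ}).toReal)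
    (θU1 θL1 θU0 θL0 : Fin J → ℝ)
    (hθU1 : θU1 = fun ℓ => ∫ x, min (P11 x) (Pc ℓ x) ∂μX)
    (hθL1 : θL1 = fun ℓ => ∫ x, max (P11 x + Pc ℓ x - 1) 0 ∂μX)
    (hθU0 : θU0 = fun ℓ => ∫ x, min (P01 x) (Pc ℓ x) ∂μX)
    (hθL0 : θL0 = fun ℓ => ∫ x, max (P01 x + Pc ℓ x - 1) 0 ∂μX)
    (hpos_j : 0 < θL1 j + θL0 j) (hpos_j' : 0 < θL1 j' + θL0 j') :
    {d : ℝ | ∃ μ ∈ MSet μ1X μ0X,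
        d = (μ {p : (Fin 2 × Fin 2) × Fin J × X | p.1 = (1, 1) ∧ p.2.1 = j}).toReal /
              (μ {p : (Fin 2 × Fin 2) × Fin J × X | p.1.2 = 1 ∧ p.2.1 = j}).toReal -
            (μ {p : (Fin 2 × Fin 2) × Fin J × X | p.1 = (1, 1) ∧ p.2.1 = j'}).toReal /
              (μ {p : (Fin 2 × Fin 2) × Fin J × X | p.1.2 = 1 ∧ p.2.1 = j'}).toReal} =
      Set.Icc
        (θL1 j / (θL1 j + θU0 j) - θU1 j' / (θU1 j' + θL0 j'))
        (θU1 j / (θU1 j + θL0 j) - θL1 j' / (θL1 j' + θU0 j')) :=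
  tprd_interval_general μX κ1 κ0 μ1X μ0X hκ1 hκ0 j j' hjj' P11 P01 Pc hP11 hP01 hPc θU1 θL1 θU0 θL0
    hθU1 hθL1 hθU0 hθL0 hpos_j hpos_j'
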